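/- Let k be a field and G a finite group with H^1(G, k) = 0. Let M be a finite-dimensional kG-module whose number m of trivial composition factors equals n = Σ_i dim_k H^1(G, W_i), the sum over all composition factors W_i of M. If M has no nonzero trivial submodule (i.e. M^G = 0), then H^1(G, M) = 0. -/

import Mathlib

open CategoryTheory

noncomputable section

/-- The `k`-linear representation of `G` attached to a module `M` over the group
algebra `k[G]` (defined on the type synonym `RestrictScalars k (MonoidAlgebra k G) M`). -/
def grpRep (k G : Type) [Field k] [Group G] (M : Type) [AddCommGroup M]
    [Module (MonoidAlgebra k G) M] : Rep k G :=
  @Rep.of k G _ _ _ _ (RestrictScalars.module k (MonoidAlgebra k G) M)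
    (Representation.ofModule (k := k) (G := G) M)

/-- The dimension over `k` of the first group cohomology `H¹(G, M)` of a `k[G]`-module `M`. -/
def h1Dim (k G : Type) [Field k] [Group G] (M : Type) [AddCommGroup M]
    [Module (MonoidAlgebra k G) M] : ℕ :=
  Module.finrank k (groupCohomology.H1 (grpRep k G M))

/-- A `k[G]`-module is trivial if it is isomorphic to the 1-dimensional trivial module `k`. -/
def IsTrivialFactor (k G : Type) [Field k] [Group G] (M : Type) [AddCommGroup M]
    [Module (MonoidAlgebra k G) M] : Prop :=
  Nonempty (grpRep k G M ≅ Rep.trivial k G k)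

/-- The subquotient `N'/N` attached to a pair of submodules `N ≤ N'`. -/
abbrev Subquot {k G : Type} [Field k] [Group G] {M : Type} [AddCommGroup M]
    [Module (MonoidAlgebra k G) M] (N N' : Submodule (MonoidAlgebra k G) M) : Type :=
  N' ⧸ Submodule.comap N'.subtype N


/-!
A short exact sequence `0 → A → B → C → 0` of representations gives the exact sequence
`0 → A^G → B^G → C^G → H¹(A) → H¹(B) → H¹(C)`, whence
`dim H¹(B) - dim B^G ≤ (dim H¹(A) - dim A^G) + (dim H¹(C) - dim C^G)`.
Along the composition series this yields
`dim H¹(M) - dim M^G ≤ ∑ᵢ (dim H¹(Wᵢ) - dim Wᵢ^G) ≤ n - m`,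
because `Wᵢ^G = k` for each trivial factor. With `m = n` and `M^G = 0` this forces `H¹(M) = 0`.
-/

open Module groupCohomology

lemma Nat.card_subtype_le_sum {ι : Type*} [Fintype ι] {P : ι → Prop} {f : ι → ℕ}
    (h : ∀ i, P i → 1 ≤ f i) : Nat.card {i // P i} ≤ ∑ i, f i := by
  classical
  rw [Nat.card_eq_fintype_card, Fintype.card_subtype, Finset.card_eq_sum_ones, Finset.sum_filter]
  exact Finset.sum_le_sum fun i _ => by split_ifs with hi; exacts [h i hi, Nat.zero_le _]

namespace groupCohomology

universe u

variable {k G : Type u} [Field k] [Group G]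

instance finiteDimensional_H0 (A : Rep k G) [FiniteDimensional k A] :
    FiniteDimensional k (H0 A) :=
  LinearEquiv.finiteDimensional (H0Iso A).toLinearEquiv.symm

instance finiteDimensional_H1 [Finite G] (A : Rep k G) [FiniteDimensional k A] :
    FiniteDimensional k (H1 A) :=
  Module.Finite.of_surjective (H1π A).hom fun x => H1_induction_on x fun c => ⟨c, rfl⟩

theorem finrank_H1_add_le_of_shortExact [Finite G] {S : ShortComplex (Rep.{u} k G)}
    (hS : S.ShortExact) [FiniteDimensional k S.X₂] :
    finrank k (H1 S.X₂) + finrank k (H0 S.X₃) + finrank k (H0 S.X₁)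
      ≤ finrank k (H1 S.X₁) + finrank k (H1 S.X₃) + finrank k (H0 S.X₂) := by
  have hmono := hS.mono_f
  have : FiniteDimensional k S.X₁ :=
    .of_injective S.f.hom.toLinearMap ((Rep.mono_iff_injective S.f).1 hmono)
  have : FiniteDimensional k S.X₃ :=
    .of_surjective S.g.hom.toLinearMap ((Rep.epi_iff_surjective S.g).1 hS.epi_g)
  let f₀ : H0 S.X₁ →ₗ[k] H0 S.X₂ := ((functor k G 0).map S.f).hom
  let g₀ : H0 S.X₂ →ₗ[k] H0 S.X₃ := ((functor k G 0).map S.g).hom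
  let δ₀ : H0 S.X₃ →ₗ[k] H1 S.X₁ := (δ hS 0 1 rfl).hom
  let f₁ : H1 S.X₁ →ₗ[k] H1 S.X₂ := ((functor k G 1).map S.f).hom
  let g₁ : H1 S.X₂ →ₗ[k] H1 S.X₃ := ((functor k G 1).map S.g).hom
  have hexact {T : ShortComplex (ModuleCat k)} (hT : T.Exact) : Function.Exact T.f T.g :=
    (ShortComplex.ShortExact.moduleCat_exact_iff_function_exact T).1 hT
  -- the Euler characteristic lemma needs a surjection at the end: stop at the image of `g₁`
  have euler := Module.sum_neg_one_pow_finrank_eq_zero_of_exact_six f₀ g₀ δ₀ f₁ g₁.rangeRestrict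
    ((ModuleCat.mono_iff_injective _).1 (mono_map_0_of_mono S.f))
    (hexact (mapShortComplex₂_exact hS 0)) (hexact (mapShortComplex₃_exact hS rfl))
    (hexact (mapShortComplex₁_exact hS rfl))
    ((LinearMap.range g₁).injective_subtype.comp_exact_iff_exact.1
      (hexact (mapShortComplex₂_exact hS 1)))
    g₁.surjective_rangeRestrict
  have hg₁ : finrank k (LinearMap.range g₁) ≤ finrank k (H1 S.X₃) := Submodule.finrank_le _
  omega

end groupCohomology

section

variable {k G : Type} [Field k] [Group G]
variable {X Y : Type} [AddCommGroup X] [Module (MonoidAlgebra k G) X]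
  [AddCommGroup Y] [Module (MonoidAlgebra k G) Y]

def h0Dim (k G : Type) [Field k] [Group G] (X : Type) [AddCommGroup X]
    [Module (MonoidAlgebra k G) X] : ℕ :=
  finrank k (H0 (grpRep k G X))

abbrev grpRep.map (φ : X →ₗ[MonoidAlgebra k G] Y) : grpRep k G X ⟶ grpRep k G Y :=
  Rep.ofModuleMonoidAlgebra.map (ModuleCat.ofHom φ)

abbrev grpRep.mapIso (e : X ≃ₗ[MonoidAlgebra k G] Y) : grpRep k G X ≅ grpRep k G Y :=
  Rep.ofModuleMonoidAlgebra.mapIso e.toModuleIso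

lemma h0Dim_congr (e : X ≃ₗ[MonoidAlgebra k G] Y) : h0Dim k G X = h0Dim k G Y :=
  ((functor k G 0).mapIso (grpRep.mapIso e)).toLinearEquiv.finrank_eq

lemma h1Dim_congr (e : X ≃ₗ[MonoidAlgebra k G] Y) : h1Dim k G X = h1Dim k G Y :=
  ((functor k G 1).mapIso (grpRep.mapIso e)).toLinearEquiv.finrank_eq

lemma h0Dim_eq_finrank_invariants :
    h0Dim k G X = finrank k (grpRep k G X).ρ.invariants :=
  (H0Iso (grpRep k G X)).toLinearEquiv.finrank_eq

lemma IsTrivialFactor.h0Dim_eq_one (h : IsTrivialFactor k G X) : h0Dim k G X = 1 := by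
  obtain ⟨i⟩ := h
  exact ((functor k G 0).mapIso i ≪≫ H0IsoOfIsTrivial _).toLinearEquiv.finrank_eq.trans
    (finrank_self k)

lemma h1Dim_eq_zero_of_subsingleton [Subsingleton X] : h1Dim k G X = 0 :=
  have : Subsingleton (H1 (grpRep k G X)) := ModuleCat.subsingleton_of_isZero <|
    (functor k G 1).map_isZero (Rep.ofModuleMonoidAlgebra.map_isZero
      (ModuleCat.isZero_of_subsingleton (ModuleCat.of (MonoidAlgebra k G) X)))
  finrank_zero_of_subsingleton

lemma finiteDimensional_grpRep_of_injective (φ : X →ₗ[MonoidAlgebra k G] Y)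
    (hφ : Function.Injective φ) [FiniteDimensional k (grpRep k G Y)] :
    FiniteDimensional k (grpRep k G X) :=
  .of_injective (grpRep.map φ).hom.toLinearMap hφ

lemma finiteDimensional_grpRep_of_surjective (φ : X →ₗ[MonoidAlgebra k G] Y)
    (hφ : Function.Surjective φ) [FiniteDimensional k (grpRep k G X)] :
    FiniteDimensional k (grpRep k G Y) :=
  .of_surjective (grpRep.map φ).hom.toLinearMap hφ

lemma finiteDimensional_grpRep_of_isScalarTower [Module k X]
    [IsScalarTower k (MonoidAlgebra k G) X] [FiniteDimensional k X] :
    FiniteDimensional k (grpRep k G X) :=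
  let e : X →ₗ[k] grpRep k G X :=
    { toFun := id
      map_add' _ _ := rfl
      map_smul' c x := (algebraMap_smul (MonoidAlgebra k G) c x).symm }
  .of_surjective e Function.surjective_id

lemma h1Dim_add_le_of_shortExact [Finite G]
    {S : ShortComplex (ModuleCat.{0} (MonoidAlgebra k G))} (hS : S.ShortExact)
    [FiniteDimensional k (grpRep k G S.X₂)] :
    h1Dim k G S.X₂ + h0Dim k G S.X₃ + h0Dim k G S.X₁
      ≤ h1Dim k G S.X₁ + h1Dim k G S.X₃ + h0Dim k G S.X₂ :=
  have : FiniteDimensional k (S.map (Rep.ofModuleMonoidAlgebra (k := k) (G := G))).X₂ := ‹_›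
  finrank_H1_add_le_of_shortExact (S := S.map Rep.ofModuleMonoidAlgebra) (hS.map_of_exact _)

end

section

variable {k G : Type} [Field k] [Group G] {M : Type} [AddCommGroup M]
  [Module (MonoidAlgebra k G) M] {A B C : Submodule (MonoidAlgebra k G) M}

lemma finiteDimensional_grpRep_subquot [FiniteDimensional k (grpRep k G M)]
    (A C : Submodule (MonoidAlgebra k G) M) : FiniteDimensional k (grpRep k G (Subquot A C)) :=
  have := finiteDimensional_grpRep_of_injective C.subtype C.injective_subtype
  finiteDimensional_grpRep_of_surjective (Submodule.mkQ _) (Submodule.mkQ_surjective _)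

abbrev subquotInclusion (hBC : B ≤ C) : Subquot A B →ₗ[MonoidAlgebra k G] Subquot A C :=
  Submodule.mapQ _ _ (Submodule.inclusion hBC) fun _ hx => hx

abbrev subquotFactor (hAB : A ≤ B) : Subquot A C →ₗ[MonoidAlgebra k G] Subquot B C :=
  Submodule.factor (p := Submodule.comap C.subtype A) fun _ hx => hAB hx

lemma subquotInclusion_injective (hBC : B ≤ C) :
    Function.Injective (subquotInclusion (A := A) hBC) := by
  refine (injective_iff_map_eq_zero _).2 fun x hx => ?_
  induction x using Submodule.Quotient.induction_on with
  | H b =>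
    exact (Submodule.Quotient.mk_eq_zero _).2
      ((Submodule.Quotient.mk_eq_zero (Submodule.comap C.subtype A)).1 hx)

lemma exact_subquotInclusion_subquotFactor (hAB : A ≤ B) (hBC : B ≤ C) :
    Function.Exact (subquotInclusion (A := A) hBC) (subquotFactor (C := C) hAB) := by
  intro y
  induction y using Submodule.Quotient.induction_on with
  | H c =>
  change Submodule.Quotient.mk (p := Submodule.comap C.subtype B) c = 0 ↔ _
  rw [Submodule.Quotient.mk_eq_zero]
  constructor
  · intro hc
    exact ⟨Submodule.Quotient.mk ⟨c, hc⟩, rfl⟩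
  · rintro ⟨x, hx⟩
    induction x using Submodule.Quotient.induction_on with
    | H b =>
    have hbc : Submodule.inclusion hBC b - c ∈ Submodule.comap C.subtype A :=
      (Submodule.Quotient.eq _).1 hx
    simpa using B.sub_mem b.2 (hAB hbc)

lemma h1Dim_subquot_add_le [Finite G] [FiniteDimensional k (grpRep k G M)] (hAB : A ≤ B)
    (hBC : B ≤ C) :
    h1Dim k G (Subquot A C) + h0Dim k G (Subquot B C) + h0Dim k G (Subquot A B)
      ≤ h1Dim k G (Subquot A B) + h1Dim k G (Subquot B C) + h0Dim k G (Subquot A C) := by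
  have := finiteDimensional_grpRep_subquot A C
  have hexact := exact_subquotInclusion_subquotFactor hAB hBC
  exact h1Dim_add_le_of_shortExact (S := ModuleCat.shortComplexOfCompEqZero _ _
    hexact.linearMap_comp_eq_zero) <| ModuleCat.shortComplex_shortExact _ hexact
    (subquotInclusion_injective hBC)
    (Submodule.factor_surjective (Submodule.comap_mono (f := C.subtype) hAB))

def subquotBotTopEquiv :
    Subquot (⊥ : Submodule (MonoidAlgebra k G) M) ⊤ ≃ₗ[MonoidAlgebra k G] M :=
  (Submodule.quotEquivOfEqBot _ (by simp)).trans Submodule.topEquiv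

lemma subsingleton_subquot_self : Subsingleton (Subquot A A) :=
  Submodule.Quotient.subsingleton_iff.2 (Submodule.comap_subtype_self A)

theorem h1Dim_add_sum_h0Dim_le [Finite G] [FiniteDimensional k (grpRep k G M)] (r : ℕ)
    (N : Fin (r + 1) → Submodule (MonoidAlgebra k G) M) (hN : Monotone N) :
    h1Dim k G (Subquot (N 0) (N (Fin.last r)))
        + ∑ i : Fin r, h0Dim k G (Subquot (N i.castSucc) (N i.succ))
      ≤ ∑ i : Fin r, h1Dim k G (Subquot (N i.castSucc) (N i.succ))
        + h0Dim k G (Subquot (N 0) (N (Fin.last r))) := by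
  induction r with
  | zero =>
    have := subsingleton_subquot_self (A := N 0)
    simp [h1Dim_eq_zero_of_subsingleton]
  | succ r ih =>
    have hinit := ih (fun i => N i.castSucc) fun _ _ h => hN (Fin.castSucc_le_castSucc_iff.2 h)
    -- the ascription makes this `N 0` syntactically the one in the goal, as `omega` needs
    have hstep := h1Dim_subquot_add_le (hN (Fin.zero_le _) : N 0 ≤ N (Fin.last r).castSucc)
      (hN (Fin.castSucc_le_succ (Fin.last r)))
    rw [Fin.castSucc_zero] at hinit
    rw [Fin.sum_univ_castSucc, Fin.sum_univ_castSucc, ← Fin.succ_last]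
    simp only [Fin.succ_castSucc]
    omega

end

theorem statement1_general (k G : Type) [Field k] [Group G] [Finite G]
    (M : Type) [AddCommGroup M] [Module (MonoidAlgebra k G) M]
    [Module k M] [IsScalarTower k (MonoidAlgebra k G) M] [FiniteDimensional k M]
    (r : ℕ) (N : Fin (r + 1) → Submodule (MonoidAlgebra k G) M)
    (hmono : Monotone N) (hbot : N 0 = ⊥) (htop : N (Fin.last r) = ⊤)
    (heq : Nat.card {i : Fin r // IsTrivialFactor k G (Subquot (N i.castSucc) (N i.succ))}
      = ∑ i : Fin r, h1Dim k G (Subquot (N i.castSucc) (N i.succ)))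
    (hnosub : @Representation.invariants k G _ _ _ _
      (RestrictScalars.module k (MonoidAlgebra k G) M)
      (Representation.ofModule (k := k) (G := G) M) =
        (⊥ : Submodule k (RestrictScalars k (MonoidAlgebra k G) M))) :
    Subsingleton (groupCohomology.H1 (grpRep k G M)) := by
  have := finiteDimensional_grpRep_of_isScalarTower (k := k) (G := G) (X := M)
  have hchain := h1Dim_add_sum_h0Dim_le r N hmono
  rw [hbot, htop, h1Dim_congr subquotBotTopEquiv, h0Dim_congr subquotBotTopEquiv] at hchain
  have hinv : h0Dim k G M = 0 := by
    have hinvariants : (grpRep k G M).ρ.invariants = ⊥ := hnosub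
    rw [h0Dim_eq_finrank_invariants, hinvariants, finrank_bot]
  have htriv : Nat.card {i : Fin r // IsTrivialFactor k G (Subquot (N i.castSucc) (N i.succ))}
      ≤ ∑ i : Fin r, h0Dim k G (Subquot (N i.castSucc) (N i.succ)) :=
    Nat.card_subtype_le_sum fun _ h => h.h0Dim_eq_one.ge
  exact Module.finrank_zero_iff.1 (by omega : h1Dim k G M = 0)

/-- If the number of trivial composition factors of `M` equals
`∑ dim H¹(G, Wᵢ)`, `H¹(G, k) = 0`, and `M` has no nonzero trivial submodule (`M^G = 0`),
then `H¹(G, M) = 0`. -/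
theorem statement1 (k G : Type) [Field k] [Group G] [Finite G]
    (hk : Subsingleton (groupCohomology.H1 (Rep.trivial k G k)))
    (M : Type) [AddCommGroup M] [Module (MonoidAlgebra k G) M]
    [Module k M] [IsScalarTower k (MonoidAlgebra k G) M] [FiniteDimensional k M]
    (r : ℕ) (N : Fin (r + 1) → Submodule (MonoidAlgebra k G) M)
    (hmono : Monotone N) (hbot : N 0 = ⊥) (htop : N (Fin.last r) = ⊤)
    (hsimple : ∀ i : Fin r,
      IsSimpleModule (MonoidAlgebra k G) (Subquot (N i.castSucc) (N i.succ)))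
    (heq : Nat.card {i : Fin r // IsTrivialFactor k G (Subquot (N i.castSucc) (N i.succ))}
      = ∑ i : Fin r, h1Dim k G (Subquot (N i.castSucc) (N i.succ)))
    (hnosub : @Representation.invariants k G _ _ _ _
      (RestrictScalars.module k (MonoidAlgebra k G) M)
      (Representation.ofModule (k := k) (G := G) M) =
        (⊥ : Submodule k (RestrictScalars k (MonoidAlgebra k G) M))) :
    Subsingleton (groupCohomology.H1 (grpRep k G M)) :=
  statement1_general k G M r N hmono hbot htop heq hnosub
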